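/- Let L be a bounded linear order. If p : L^n → L is a lattice polynomial function with w(A) = p(e_A^{a,b}), then p(t) = ⋁_{A: w(A)=b} ⋀_{i∈A} t_i = ⋀_{A: w*(A)=b} ⋁_{i∈A} t_i, where w*(A) = b iff w([n]\A) = a (duality between disjunctive and conjunctive normal forms). -/

import Mathlib

/-!
On a chain, `c ≤ x ⊔ y` iff `c ≤ x ∨ c ≤ y`, so induction on a lattice polynomial `p` shows
that `c ≤ p t` holds exactly when `p` is `⊤` at the point `e_A` with `A = {i | c ≤ t i}`.
Taking `c = p t` and `c = A.inf t` gives the two inequalities of the disjunctive normal form.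
The conjunctive normal form is the disjunctive one over `Lᵒᵈ`, where `p` is again a lattice
polynomial and `e_A` becomes `e_{Aᶜ}`.
-/

/-- Lattice polynomial functions: the smallest class of functions `L^n → L` containing the
coordinate projections and closed under pointwise binary min and max. -/
inductive IsLatticePolynomial {L : Type*} [LinearOrder L] {n : ℕ} :
    ((Fin n → L) → L) → Prop
  | proj (k : Fin n) : IsLatticePolynomial (fun t => t k)
  | inf {p q : (Fin n → L) → L} : IsLatticePolynomial p → IsLatticePolynomial q →
      IsLatticePolynomial (fun t => p t ⊓ q t)
  | sup {p q : (Fin n → L) → L} : IsLatticePolynomial p → IsLatticePolynomial q →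
      IsLatticePolynomial (fun t => p t ⊔ q t)

open Finset OrderDual

/-- The point `e_A^{⊥,⊤}`. -/
def extremalPoint {L : Type*} [Bot L] [Top L] {n : ℕ} (A : Finset (Fin n)) : Fin n → L :=
  fun i => if i ∈ A then ⊤ else ⊥

theorem extremalPoint_mono {L : Type*} [Preorder L] [BoundedOrder L] {n : ℕ} :
    Monotone (extremalPoint : Finset (Fin n) → Fin n → L) := by
  intro A B hAB i
  by_cases hA : i ∈ A
  · simp [extremalPoint, hA, hAB hA]
  · simp [extremalPoint, hA]

theorem ofDual_extremalPoint {L : Type*} [Bot L] [Top L] {n : ℕ} (A : Finset (Fin n))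
    (i : Fin n) : ofDual (extremalPoint (L := Lᵒᵈ) A i) = extremalPoint Aᶜ i := by
  by_cases hi : i ∈ A <;> simp [extremalPoint, hi]

namespace IsLatticePolynomial

variable {L : Type*} [LinearOrder L] {n : ℕ} {p : (Fin n → L) → L}

theorem monotone (hp : IsLatticePolynomial p) : Monotone p := by
  induction hp with
  | proj k => exact fun x y h => h k
  | inf _ _ ihp ihq => exact fun x y h => inf_le_inf (ihp h) (ihq h)
  | sup _ _ ihp ihq => exact fun x y h => sup_le_sup (ihp h) (ihq h)

theorem dual (hp : IsLatticePolynomial p) :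
    IsLatticePolynomial fun t : Fin n → Lᵒᵈ => toDual (p fun i => ofDual (t i)) := by
  induction hp with
  | proj k => exact .proj k
  | inf _ _ ihp ihq => exact .sup ihp ihq
  | sup _ _ ihp ihq => exact .inf ihp ihq

variable [BoundedOrder L]

theorem le_apply_iff_extremalPoint (hp : IsLatticePolynomial p) (t : Fin n → L) (c : L) :
    c ≤ p t ↔ ⊤ ≤ p (extremalPoint {i | c ≤ t i}) := by
  induction hp with
  | proj k =>
    by_cases hk : c ≤ t k
    · simp [extremalPoint, hk]
    · simpa [extremalPoint, hk] using fun h => hk (le_top.trans (h.trans_le bot_le))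
  | inf _ _ ihp ihq => simp only [le_inf_iff, ihp, ihq]
  | sup _ _ ihp ihq => simp only [le_sup_iff, ihp, ihq]

theorem eq_sup_inf (hp : IsLatticePolynomial p) (t : Fin n → L) :
    p t = (univ.filter fun A => p (extremalPoint A) = ⊤).sup (fun A => A.inf t) := by
  apply le_antisymm
  · have hmem : p (extremalPoint {i | p t ≤ t i}) = ⊤ :=
      top_le_iff.1 ((hp.le_apply_iff_extremalPoint t (p t)).1 le_rfl)
    exact le_sup_of_le (mem_filter.2 ⟨mem_univ _, hmem⟩)
      (Finset.le_inf fun i hi => (mem_filter.1 hi).2)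
  · refine Finset.sup_le fun A hA => (hp.le_apply_iff_extremalPoint t _).2 ?_
    rw [← (mem_filter.1 hA).2]
    exact hp.monotone (extremalPoint_mono fun i hi => mem_filter.2 ⟨mem_univ _, inf_le hi⟩)

theorem eq_inf_sup (hp : IsLatticePolynomial p) (t : Fin n → L) :
    p t = (univ.filter fun A => p (extremalPoint Aᶜ) = ⊥).inf (fun A => A.sup t) := by
  have h := congrArg ofDual (hp.dual.eq_sup_inf (toDual ∘ t))
  simpa only [Finset.ofDual_sup, Finset.ofDual_inf, ofDual_extremalPoint, toDual_eq_top,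
    ofDual_toDual, Function.comp_def] using h

end IsLatticePolynomial

/-- Disjunctive and conjunctive normal forms, with `w(A) = p(e_A^{⊥,⊤})` and the dual
`w*(A) = ⊤` iff `w([n]\A) = ⊥`. -/
theorem latticePolynomial_dnf_cnf {L : Type*} [LinearOrder L] [BoundedOrder L]
    {n : ℕ} (p : (Fin n → L) → L) (hp : IsLatticePolynomial p) (t : Fin n → L) :
    p t = (Finset.univ.filter fun A : Finset (Fin n) =>
        p (fun i => if i ∈ A then (⊤ : L) else ⊥) = ⊤).sup (fun A => A.inf t) ∧
    p t = (Finset.univ.filter fun A : Finset (Fin n) =>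
        p (fun i => if i ∈ Aᶜ then (⊤ : L) else ⊥) = ⊥).inf (fun A => A.sup t) :=
  ⟨hp.eq_sup_inf t, hp.eq_inf_sup t⟩
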